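/- arXiv:cond-mat/0510105 — 2 statements merged into one kernel-verified Lean document; each statement's English description precedes it below -/
import Mathlib

section
/- Let f̃ : (0,∞) → ℝ satisfy f̃(1) = 0 and f̃(x) ≠ 0 for all x ≠ 1, and suppose f̃(1/x)·( f̃(x) − f̃(xy) ) = f̃(x)·f̃(y) for all x, y ∈ (0,∞). Then the quantity 1/f̃(1/x) + 1/f̃(x) is the same real number α for every x ∈ (0,∞) with x ≠ 1, and the functional equation f̃(x) + f̃(y) − f̃(xy) = α·f̃(x)·f̃(y) holds for all x, y ∈ (0,∞). -/
/-- if `f̃(1) = 0`, `f̃(x) ≠ 0` for `x ≠ 1`, and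
`f̃(1/x)(f̃(x) − f̃(xy)) = f̃(x)·f̃(y)` for all `x, y > 0`, then
`1/f̃(1/x) + 1/f̃(x)` is a constant `α` (independent of `x ≠ 1`), and
`f̃(x) + f̃(y) − f̃(xy) = α·f̃(x)·f̃(y)` holds for all `x, y > 0`. -/
theorem functional_equation_constant_alpha
    (ft : ℝ → ℝ)
    (hft1 : ft 1 = 0)
    (hft_ne : ∀ x : ℝ, 0 < x → x ≠ 1 → ft x ≠ 0)
    (H : ∀ x y : ℝ, 0 < x → 0 < y →
      ft (1 / x) * (ft x - ft (x * y)) = ft x * ft y) :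
    ∃ α : ℝ,
      (∀ x : ℝ, 0 < x → x ≠ 1 → 1 / ft (1 / x) + 1 / ft x = α) ∧
      (∀ x y : ℝ, 0 < x → 0 < y →
        ft x + ft y - ft (x * y) = α * ft x * ft y) := by
  have ha2 : ft 2 ≠ 0 := hft_ne 2 (by norm_num) (by norm_num)
  have hi2 : ft (1 / 2) ≠ 0 := hft_ne _ (by norm_num) (by norm_num)
  have hconst : ∀ x : ℝ, 0 < x → x ≠ 1 →
      1 / ft (1 / x) + 1 / ft x = 1 / ft (1 / 2) + 1 / ft 2 := by
    intro x hx hx1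
    have hax : ft x ≠ 0 := hft_ne x hx hx1
    have hix : ft (1 / x) ≠ 0 := hft_ne _ (by positivity) (by
      simp only [ne_eq, div_eq_one_iff_eq (ne_of_gt hx)]
      exact fun h => hx1 h.symm)
    have h1 := H x 2 hx (by norm_num)
    have h2' := H 2 x (by norm_num) hx
    rw [mul_comm 2 x] at h2'
    have key : ft (1/x) * ft (1/2) * ft x + ft x * ft 2 * ft (1/x)
        = ft (1/x) * ft (1/2) * ft 2 + ft x * ft 2 * ft (1/2) := by
      linear_combination ft (1/2) * h1 - ft (1/x) * h2'
    field_simp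
    linarith [key]
  refine ⟨1 / ft (1 / 2) + 1 / ft 2, hconst, ?_⟩
  intro x y hx hy
  by_cases hx1 : x = 1
  · subst hx1
    simp [hft1]
  · have hax : ft x ≠ 0 := hft_ne x hx hx1
    have hix : ft (1 / x) ≠ 0 := hft_ne _ (by positivity) (by
      simp only [ne_eq, div_eq_one_iff_eq (ne_of_gt hx)]
      exact fun h => hx1 h.symm)
    have h := H x y hx hy
    rw [← hconst x hx hx1]
    field_simp
    linear_combination h
end

section
/- Let α ≠ 0 and let f̃ : (0,∞) → ℝ be continuous, differentiable at 1 with f̃(1) = 0 and f̃'(1) = −1, and satisfy f̃(x) + f̃(y) − f̃(xy) = α·f̃(x)·f̃(y) for all x, y ∈ (0,∞). Then the function g(x) = 1 − α·f̃(x) satisfies g(xy) = g(x)·g(y) for all x, y > 0, and consequently f̃(x) = (1 − x^α)/α for all x > 0. -/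
/-- in the case `α ≠ 0` of the functional equation
`f̃(x) + f̃(y) − f̃(xy) = α f̃(x) f̃(y)`, the function `g(x) = 1 − α f̃(x)` is
multiplicative and consequently `f̃(x) = (1 − x^α)/α` for all `x > 0`. -/
theorem functional_equation_tsallis_case
    (α : ℝ) (hα : α ≠ 0)
    (ft : ℝ → ℝ)
    (hft_cont : ContinuousOn ft (Set.Ioi 0))
    (hft1 : ft 1 = 0) (hft'1 : HasDerivAt ft (-1) 1)
    (H : ∀ x y : ℝ, 0 < x → 0 < y →
      ft x + ft y - ft (x * y) = α * ft x * ft y) :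
    (∀ x y : ℝ, 0 < x → 0 < y →
      1 - α * ft (x * y) = (1 - α * ft x) * (1 - α * ft y)) ∧
    (∀ x : ℝ, 0 < x → ft x = (1 - x ^ α) / α) := by
  have hmul : ∀ x y : ℝ, 0 < x → 0 < y →
      1 - α * ft (x * y) = (1 - α * ft x) * (1 - α * ft y) := by
    intro x y hx hy
    have h2 : ft (x * y) = ft x + ft y - α * ft x * ft y := by linarith [H x y hx hy]
    rw [h2]; ring
  refine ⟨hmul, ?_⟩
  -- derivative of ft at every x > 0
  have key : ∀ x : ℝ, 0 < x → HasDerivAt ft (-(1 - α * ft x) / x) x := by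
    intro x hx
    have hF : HasDerivAt (fun t => ft x + (1 - α * ft x) * ft t)
        (-(1 - α * ft x)) 1 := by
      simpa using ((hft'1.const_mul (1 - α * ft x)).const_add (ft x))
    have hF' : HasDerivAt (fun t => ft (x * t)) (-(1 - α * ft x)) 1 := by
      apply hF.congr_of_eventuallyEq
      filter_upwards [eventually_gt_nhds (show (0:ℝ) < 1 by norm_num)] with t ht
      have h := H x t hx ht
      ring_nf
      ring_nf at h
      linarith
    have hinner : HasDerivAt (fun u : ℝ => u / x) (1 / x) x := by
      simpa using (hasDerivAt_id x).div_const x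
    have hF'' : HasDerivAt (fun t => ft (x * t)) (-(1 - α * ft x)) (x / x) := by
      rw [div_self hx.ne']; exact hF'
    have hcomp := HasDerivAt.comp (h₂ := fun t => ft (x * t))
      (h := fun u : ℝ => u / x) x hF'' hinner
    have heq : ((fun t => ft (x * t)) ∘ fun u : ℝ => u / x) = ft := by
      funext u
      simp only [Function.comp_apply]
      rw [mul_div_cancel₀ _ hx.ne']
    rw [heq] at hcomp
    refine hcomp.congr_deriv ?_
    ring
  -- h(x) = (1 - α ft x) * x^(-α) has zero derivative
  have hderiv : ∀ x : ℝ, 0 < x →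
      HasDerivAt (fun u => (1 - α * ft u) * u ^ (-α)) 0 x := by
    intro x hx
    have hg : HasDerivAt (fun u => 1 - α * ft u)
        (-(α * (-(1 - α * ft x) / x))) x := ((key x hx).const_mul α).const_sub 1
    have hp : HasDerivAt (fun u : ℝ => u ^ (-α)) (-α * x ^ (-α - 1)) x :=
      Real.hasDerivAt_rpow_const (Or.inl hx.ne')
    have := hg.mul hp
    refine this.congr_deriv ?_
    have hx1 : x ^ (-α - 1) = x ^ (-α) / x := by
      rw [Real.rpow_sub hx, Real.rpow_one]
    rw [hx1]
    field_simp
    ring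
  -- constancy
  have hconst : ∀ x : ℝ, 0 < x →
      (1 - α * ft x) * x ^ (-α) = 1 := by
    intro x hx
    have := (convex_Ioi (0:ℝ)).is_const_of_fderivWithin_eq_zero
      (f := fun u => (1 - α * ft u) * u ^ (-α))
      (fun z hz => ((hderiv z hz).differentiableAt).differentiableWithinAt)
      (fun z hz => by
        rw [fderivWithin_of_isOpen isOpen_Ioi hz,
          (hderiv z hz).hasFDerivAt.fderiv]
        exact ContinuousLinearMap.ext fun v => by simp)
      hx (Set.mem_Ioi.mpr one_pos)
    simpa [hft1] using this
  intro x hx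
  have h := hconst x hx
  have hxα : x ^ (-α) * x ^ α = 1 := by
    rw [← Real.rpow_add hx]; simp
  have hgx : 1 - α * ft x = x ^ α := by
    have := congrArg (fun t => t * x ^ α) h
    simp only [mul_assoc, hxα, mul_one, one_mul] at this
    exact this
  field_simp
  linarith
end
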